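/- Assume P is transitive. Then the Strong Supplementation Principle holds if and only if for all x, y ∈ U: if every u that overlaps x also overlaps y, then Ing x y. -/

import Mathlib

/-!
An ingrediens of `x` exterior to `y` overlaps `x` but not `y`, so strong supplementation gives the
overlap criterion. Conversely, if every ingrediens of `x` overlapped `y`, then by transitivity so
would everything overlapping `x`, and the criterion would make `x` an ingrediens of `y`.
-/

variable {U : Type*}

/-- `x` is an ingrediens of `y`. -/
def Ing (P : U → U → Prop) (x y : U) : Prop := x = y ∨ P x y

/-- `x` and `y` overlap. -/
def Ov (P : U → U → Prop) (x y : U) : Prop := ∃ z, Ing P z x ∧ Ing P z y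

/-- `x` is exterior to `y`. -/
def MExt (P : U → U → Prop) (x y : U) : Prop := ¬ Ov P x y

/-- `x` is a mereological sum of all elements of `S`. -/
def MSum (P : U → U → Prop) (x : U) (S : Set U) : Prop :=
  (∀ s ∈ S, Ing P s x) ∧ ∀ u, Ing P u x → ∃ s ∈ S, Ov P s u

/-- `x` is a supremum (least upper bound) of `S`. -/
def MSup (P : U → U → Prop) (x : U) (S : Set U) : Prop :=
  (∀ s ∈ S, Ing P s x) ∧ ∀ u, (∀ s ∈ S, Ing P s u) → Ing P x u

/-- `x` and `y` cross (properly overlap). -/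
def POv (P : U → U → Prop) (x y : U) : Prop :=
  x ≠ y ∧ ¬ P x y ∧ ¬ P y x ∧ ∃ z, P z x ∧ P z y

section Mereology

variable {P : U → U → Prop}

theorem Ing.refl (x : U) : Ing P x x := Or.inl rfl

theorem Ing.trans (htrans : ∀ x y z, P x y → P y z → P x z) {x y z : U} :
    Ing P x y → Ing P y z → Ing P x z := by
  rintro (rfl | hxy) (rfl | hyz)
  · exact Ing.refl _
  · exact Or.inr hyz
  · exact Or.inr hxy
  · exact Or.inr (htrans _ _ _ hxy hyz)

theorem Ov.of_ing {x y : U} (h : Ing P x y) : Ov P x y := ⟨x, Ing.refl x, h⟩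

theorem Ov.mono_left (htrans : ∀ x y z, P x y → P y z → P x z) {x x' y : U}
    (hx : Ing P x x') : Ov P x y → Ov P x' y := by
  rintro ⟨z, hzx, hzy⟩
  exact ⟨z, Ing.trans htrans hzx hx, hzy⟩

theorem ing_of_forall_ov_imp_of_ssp
    (ssp : ∀ x y, ¬ Ing P x y → ∃ z, Ing P z x ∧ MExt P z y) {x y : U}
    (h : ∀ u, Ov P u x → Ov P u y) : Ing P x y := by
  by_contra hxy
  obtain ⟨z, hzx, hzy⟩ := ssp x y hxy
  exact hzy (h z (Ov.of_ing hzx))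

theorem ssp_of_ing_of_forall_ov_imp (htrans : ∀ x y z, P x y → P y z → P x z)
    (hcrit : ∀ x y, (∀ u, Ov P u x → Ov P u y) → Ing P x y) {x y : U} (hxy : ¬ Ing P x y) :
    ∃ z, Ing P z x ∧ MExt P z y := by
  by_contra! hov
  refine hxy (hcrit x y fun u ⟨w, hwu, hwx⟩ => ?_)
  exact Ov.mono_left htrans hwu (not_not.mp (hov w hwx))

end Mereology

theorem stmt_9 (P : U → U → Prop)
    (htrans : ∀ x y z, P x y → P y z → P x z) :
    (∀ x y, ¬ Ing P x y → ∃ z, Ing P z x ∧ MExt P z y) ↔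
      (∀ x y, (∀ u, Ov P u x → Ov P u y) → Ing P x y) :=
  ⟨fun ssp _ _ => ing_of_forall_ov_imp_of_ssp ssp,
    fun hcrit _ _ => ssp_of_ing_of_forall_ov_imp htrans hcrit⟩
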